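/- Let d be a positive integer, B = (d² + 3d)/2, and let φ : S^{d−1} → ℝ^B map x = (x₁,…,x_d) to (x₁²,…,x_d², x₁x₂,…,x_{d−1}x_d, x₁,…,x_d). Then there exists a set S ⊂ S^{d−1} with |S| = B such that φ(S) spans (has affine span equal to) the hyperplane {ξ ∈ ℝ^B : ξ₁ + ⋯ + ξ_d = 1}; in particular φ restricted to S is injective and φ(S) is affinely independent. -/
import Mathlib

/-- Index type for the coordinates of `ℝ^B`, `B = (d² + 3d)/2`: one coordinate
for each square `xᵢ²`, one for each product `xᵢxⱼ` (`i < j`), and one for each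
linear term `xᵢ`. -/
abbrev QIdx (d : ℕ) : Type :=
  Fin d ⊕ ({p : Fin d × Fin d // p.1 < p.2} ⊕ Fin d)

/-- The map `φ : ℝ^d → ℝ^B` sending `x` to
`(x₁², …, x_d², x₁x₂, …, x_{d-1}x_d, x₁, …, x_d)`. -/
def phi {d : ℕ} (x : Fin d → ℝ) : QIdx d → ℝ :=
  Sum.elim (fun i => x i ^ 2)
    (Sum.elim (fun p => x p.1.1 * x p.1.2) (fun i => x i))

set_option maxRecDepth 8000

namespace SpherePts

open Finset

noncomputable def rc : ℝ := (Real.sqrt 2)⁻¹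

lemma rc_pos : 0 < rc := by unfold rc; positivity

lemma rc_sq : rc ^ 2 = 1 / 2 := by
  unfold rc; rw [inv_pow, Real.sq_sqrt (by norm_num : (0:ℝ) ≤ 2)]; norm_num

lemma rc_lt_one : rc < 1 := by nlinarith [rc_sq, rc_pos]
lemma rc_ne_zero : rc ≠ 0 := ne_of_gt rc_pos
lemma rc_ne_one : rc ≠ 1 := ne_of_lt rc_lt_one

variable {d : ℕ}

/-- standard unit vector `eᵢ` in `ℝ^d` -/
def ptE (d : ℕ) (i : Fin d) : Fin d → ℝ := fun j => if j = i then 1 else 0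

/-- `(eᵢ + eⱼ)/√2` -/
noncomputable def ptU (d : ℕ) (p : {p : Fin d × Fin d // p.1 < p.2}) : Fin d → ℝ :=
  fun j => if j = p.1.1 ∨ j = p.1.2 then rc else 0

/-- the family of sphere points, indexed by `QIdx d` -/
noncomputable def Pt (d : ℕ) : QIdx d → Fin d → ℝ :=
  Sum.elim (fun i => ptE d i) (Sum.elim (fun p => ptU d p) (fun i => -ptE d i))

def eSq (d : ℕ) (i : Fin d) : QIdx d → ℝ := Pi.single (Sum.inl i) 1
def ePr (d : ℕ) (p : {p : Fin d × Fin d // p.1 < p.2}) : QIdx d → ℝ :=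
  Pi.single (Sum.inr (Sum.inl p)) 1
def eLn (d : ℕ) (i : Fin d) : QIdx d → ℝ := Pi.single (Sum.inr (Sum.inr i)) 1

lemma phi_E (i : Fin d) : phi (ptE d i) = eSq d i + eLn d i := by
  funext q
  rcases q with k | q | k <;>
    simp only [phi, ptE, eSq, eLn, Sum.elim_inl, Sum.elim_inr, Pi.add_apply, Pi.single_apply,
      Sum.inl.injEq, Sum.inr.injEq, reduceCtorEq, if_false]
  · split_ifs <;> norm_num
  · obtain ⟨⟨a, b⟩, hab⟩ := q
    have : a ≠ b := ne_of_lt hab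
    split_ifs with h1 h2 h2 <;> simp_all
  · split_ifs <;> norm_num

lemma phi_N (i : Fin d) : phi (-ptE d i) = eSq d i - eLn d i := by
  funext q
  rcases q with k | q | k <;>
    simp only [phi, ptE, eSq, eLn, Pi.neg_apply, Sum.elim_inl, Sum.elim_inr, Pi.sub_apply,
      Pi.single_apply, Sum.inl.injEq, Sum.inr.injEq, reduceCtorEq, if_false]
  · split_ifs <;> norm_num
  · obtain ⟨⟨a, b⟩, hab⟩ := q
    have : a ≠ b := ne_of_lt hab
    split_ifs with h1 h2 h2 <;> simp_all
  · split_ifs <;> norm_num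

lemma phi_U (p : {p : Fin d × Fin d // p.1 < p.2}) :
    phi (ptU d p) =
      (2⁻¹ : ℝ) • (eSq d p.1.1 + eSq d p.1.2 + ePr d p)
      + rc • (eLn d p.1.1 + eLn d p.1.2) := by
  obtain ⟨⟨i, j⟩, hij⟩ := p
  have hij' : i ≠ j := ne_of_lt hij
  funext q
  rcases q with k | q | k <;>
    simp only [phi, ptU, eSq, ePr, eLn, Sum.elim_inl, Sum.elim_inr, Pi.add_apply, Pi.smul_apply,
      Pi.single_apply, Sum.inl.injEq, Sum.inr.injEq, reduceCtorEq, if_false,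
      smul_eq_mul]
  · split_ifs <;> simp_all <;> nlinarith [rc_sq]
  · obtain ⟨⟨a, b⟩, hab⟩ := q
    have key : ((a = i ∨ a = j) ∧ (b = i ∨ b = j)) ↔ (a = i ∧ b = j) := by
      constructor
      · rintro ⟨h1 | h1, h2 | h2⟩
        · subst h1; subst h2; exfalso; simp at hab
        · exact ⟨h1, h2⟩
        · subst h1; subst h2; exfalso; simp at hab hij; omega
        · subst h1; subst h2; exfalso; simp at hab
      · rintro ⟨h1, h2⟩; exact ⟨Or.inl h1, Or.inr h2⟩
    by_cases h : a = i ∧ b = j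
    · have h1 : (a = i ∨ a = j) := Or.inl h.1
      have h2 : (b = i ∨ b = j) := Or.inr h.2
      simp only [h1, h2, if_true, if_pos]
      rw [if_pos]
      · nlinarith [rc_sq]
      · exact Subtype.ext (Prod.ext h.1 h.2)
    · have hne : ¬(⟨(a,b),hab⟩ : {p : Fin d × Fin d // p.1 < p.2}) = ⟨(i,j),hij⟩ := by
        intro hc
        apply h
        obtain ⟨h1, h2⟩ := Prod.mk.injEq .. ▸ (Subtype.ext_iff.mp hc)
        exact ⟨h1, h2⟩
      rw [if_neg hne]
      have := (not_iff_not.mpr key).mpr h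
      rcases not_and_or.mp this with h1 | h1
      · rw [if_neg h1]; ring
      · rw [if_neg h1]; ring
  · split_ifs <;> simp_all

lemma sphere_E (i : Fin d) : ∑ j, ptE d i j ^ 2 = 1 := by
  simp [ptE, apply_ite (· ^ 2)]

lemma sphere_U (p : {p : Fin d × Fin d // p.1 < p.2}) : ∑ j, ptU d p j ^ 2 = 1 := by
  obtain ⟨⟨i, j⟩, hij⟩ := p
  have hij' : i ≠ j := ne_of_lt hij
  have : ∀ k : Fin d, ptU d ⟨(i,j),hij⟩ k ^ 2
      = (if k = i then rc ^ 2 else 0) + (if k = j then rc ^ 2 else 0) := by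
    intro k
    simp only [ptU]
    split_ifs <;> simp_all
  rw [Finset.sum_congr rfl fun k _ => this k, Finset.sum_add_distrib]
  simp [rc_sq]
  norm_num

lemma sphere_Pt (a : QIdx d) : ∑ j, Pt d a j ^ 2 = 1 := by
  rcases a with i | p | i
  · exact sphere_E i
  · exact sphere_U p
  · simp only [Pt, Sum.elim_inr, Pi.neg_apply, neg_sq]
    exact sphere_E i

lemma Pt_inj : Function.Injective (Pt d) := by
  intro a b h
  have hc := fun j => congrFun h j
  rcases a with i | p | i <;> rcases b with i' | p' | i' <;>
    simp only [Pt, Sum.elim_inl, Sum.elim_inr] at hc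
  · by_cases hii : i = i'
    · exact congrArg Sum.inl hii
    · exfalso; have := hc i; simp [ptE, hii] at this
  · exfalso; have := hc i; simp [ptE, ptU] at this
    split_ifs at this
    · exact rc_ne_one this.symm
    · norm_num at this
  · exfalso; have := hc i; simp [ptE] at this
    split_ifs at this <;> norm_num at this
  · exfalso; have := hc i'; simp [ptE, ptU] at this
    split_ifs at this
    · exact rc_ne_one this
    · norm_num at this
  · obtain ⟨⟨i, j⟩, hij⟩ := p
    obtain ⟨⟨i', j'⟩, hij'⟩ := p'
    have hij2 : i.val < j.val := hij
    have hij2' : i'.val < j'.val := hij'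
    have e1 : i = i' ∨ i = j' := by
      by_contra hcon
      push_neg at hcon
      have := hc i; simp [ptU, hcon.1, hcon.2] at this
      exact rc_ne_zero this
    have e2 : j = i' ∨ j = j' := by
      by_contra hcon
      push_neg at hcon
      have := hc j; simp [ptU, hcon.1, hcon.2] at this
      exact rc_ne_zero this
    have e3 : i' = i ∨ i' = j := by
      by_contra hcon
      push_neg at hcon
      have := hc i'; simp [ptU, hcon.1, hcon.2] at this
      exact rc_ne_zero this.symm
    have e4 : j' = i ∨ j' = j := by
      by_contra hcon
      push_neg at hcon
      have := hc j'; simp [ptU, hcon.1, hcon.2] at this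
      exact rc_ne_zero this.symm
    have e1' : i.val = i'.val ∨ i.val = j'.val := e1.imp (congrArg Fin.val) (congrArg Fin.val)
    have e2' : j.val = i'.val ∨ j.val = j'.val := e2.imp (congrArg Fin.val) (congrArg Fin.val)
    have e3' : i'.val = i.val ∨ i'.val = j.val := e3.imp (congrArg Fin.val) (congrArg Fin.val)
    have e4' : j'.val = i.val ∨ j'.val = j.val := e4.imp (congrArg Fin.val) (congrArg Fin.val)
    have hiv : i.val = i'.val ∧ j.val = j'.val := by omega
    have h1 : i = i' := Fin.ext hiv.1
    have h2 : j = j' := Fin.ext hiv.2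
    subst h1; subst h2; rfl
  · exfalso
    have := hc p.1.1
    simp [ptU, ptE] at this
    split_ifs at this
    · nlinarith [rc_pos]
    · norm_num at this; exact rc_ne_zero this
  · exfalso; have := hc i; simp [ptE] at this
    split_ifs at this <;> norm_num at this
  · exfalso
    have := hc p'.1.1
    simp [ptU, ptE] at this
    split_ifs at this
    · nlinarith [rc_pos]
    · norm_num at this; exact rc_ne_zero this.symm
  · by_cases hii : i = i'
    · exact congrArg (fun i => Sum.inr (Sum.inr i)) hii
    · exfalso; have := hc i; simp [ptE, hii] at this

def pairEquiv (d : ℕ) : {p : Fin d × Fin d // p.1 < p.2} ≃ (Σ j : Fin d, Fin j.val) where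
  toFun p := ⟨p.1.2, ⟨p.1.1.val, p.2⟩⟩
  invFun x := ⟨(⟨x.2.val, lt_trans x.2.isLt x.1.isLt⟩, x.1), x.2.isLt⟩
  left_inv p := by
    apply Subtype.ext
    apply Prod.ext <;> simp
  right_inv x := by
    apply Sigma.ext <;> simp

lemma card_pairs (d : ℕ) :
    Fintype.card {p : Fin d × Fin d // p.1 < p.2} * 2 = d * (d - 1) := by
  rw [Fintype.card_congr (pairEquiv d), Fintype.card_sigma]
  simp only [Fintype.card_fin]
  rw [Fin.sum_univ_eq_sum_range (fun i => i) d, Finset.sum_range_id_mul_two]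

lemma card_QIdx (d : ℕ) : Fintype.card (QIdx d) = (d ^ 2 + 3 * d) / 2 := by
  have h := card_pairs d
  have hdd : d ^ 2 = d * d := by ring
  have h3 : d * (d - 1) + d = d * d := by
    cases d with
    | zero => simp
    | succ n => simp [Nat.succ_sub_one]; ring
  simp only [QIdx, Fintype.card_sum, Fintype.card_fin]
  rw [hdd]
  omega

/-- the point set -/
noncomputable def Sd (d : ℕ) : Finset (Fin d → ℝ) := Finset.image (Pt d) Finset.univ

/-- the vector span of the image -/
noncomputable def V (d : ℕ) : Submodule ℝ (QIdx d → ℝ) :=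
  vectorSpan ℝ (phi '' (Sd d : Set (Fin d → ℝ)))

lemma phi_Pt_mem (a : QIdx d) : phi (Pt d a) ∈ phi '' (Sd d : Set (Fin d → ℝ)) :=
  Set.mem_image_of_mem _ (by simp [Sd])

lemma diff_mem (a b : QIdx d) : phi (Pt d a) - phi (Pt d b) ∈ V d := by
  have := vsub_mem_vectorSpan ℝ (phi_Pt_mem a) (phi_Pt_mem b)
  simpa [V, vsub_eq_sub] using this

lemma lin_mem (i : Fin d) : eLn d i ∈ V d := by
  have h := diff_mem (Sum.inl i) (Sum.inr (Sum.inr i))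
  rw [show Pt d (Sum.inl i) = ptE d i from rfl,
    show Pt d (Sum.inr (Sum.inr i)) = -ptE d i from rfl, phi_E, phi_N] at h
  have key : eLn d i =
      (2⁻¹ : ℝ) • ((eSq d i + eLn d i) - (eSq d i - eLn d i)) := by
    module
  rw [key]
  exact Submodule.smul_mem _ _ h

lemma sq_mem (hd : 0 < d) (i : Fin d) : eSq d i - eSq d ⟨0, hd⟩ ∈ V d := by
  have h := diff_mem (Sum.inl i) (Sum.inl (⟨0, hd⟩ : Fin d))
  rw [show Pt d (Sum.inl i) = ptE d i from rfl,
    show Pt d (Sum.inl (⟨0, hd⟩ : Fin d)) = ptE d ⟨0, hd⟩ from rfl, phi_E, phi_E] at h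
  have key : eSq d i - eSq d ⟨0, hd⟩ =
      ((eSq d i + eLn d i) - (eSq d ⟨0, hd⟩ + eLn d ⟨0, hd⟩))
      - eLn d i + eLn d ⟨0, hd⟩ := by
    module
  rw [key]
  exact Submodule.add_mem _ (Submodule.sub_mem _ h (lin_mem i)) (lin_mem ⟨0, hd⟩)

lemma pr_mem (hd : 0 < d) (p : {p : Fin d × Fin d // p.1 < p.2}) : ePr d p ∈ V d := by
  have h := diff_mem (Sum.inr (Sum.inl p)) (Sum.inl (⟨0, hd⟩ : Fin d))
  rw [show Pt d (Sum.inr (Sum.inl p)) = ptU d p from rfl,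
    show Pt d (Sum.inl (⟨0, hd⟩ : Fin d)) = ptE d ⟨0, hd⟩ from rfl, phi_U, phi_E] at h
  have key : ePr d p =
      (2:ℝ) • (((2⁻¹ : ℝ) • (eSq d p.1.1 + eSq d p.1.2 + ePr d p)
          + rc • (eLn d p.1.1 + eLn d p.1.2))
        - (eSq d ⟨0, hd⟩ + eLn d ⟨0, hd⟩))
      - (eSq d p.1.1 - eSq d ⟨0, hd⟩)
      - (eSq d p.1.2 - eSq d ⟨0, hd⟩)
      - (2 * rc) • eLn d p.1.1
      - (2 * rc) • eLn d p.1.2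
      + (2:ℝ) • eLn d ⟨0, hd⟩ := by
    module
  rw [key]
  refine Submodule.add_mem _ (Submodule.sub_mem _ (Submodule.sub_mem _ (Submodule.sub_mem _
    (Submodule.sub_mem _ (Submodule.smul_mem _ _ h) (sq_mem hd p.1.1)) (sq_mem hd p.1.2))
    (Submodule.smul_mem _ _ (lin_mem p.1.1))) (Submodule.smul_mem _ _ (lin_mem p.1.2)))
    (Submodule.smul_mem _ _ (lin_mem ⟨0, hd⟩))

/-- The linear functional `ξ ↦ ∑ᵢ ξ(sq i)`. -/
def sumSq (d : ℕ) : (QIdx d → ℝ) →ₗ[ℝ] ℝ where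
  toFun ξ := ∑ i, ξ (Sum.inl i)
  map_add' x y := by simp [Finset.sum_add_distrib]
  map_smul' c x := by simp [Finset.mul_sum]

lemma repr_of_sum_eq_zero (hd : 0 < d) (v : QIdx d → ℝ) (hv : ∑ i, v (Sum.inl i) = 0) :
    v = (∑ i, v (Sum.inr (Sum.inr i)) • eLn d i)
      + (∑ p, v (Sum.inr (Sum.inl p)) • ePr d p)
      + (∑ i, v (Sum.inl i) • (eSq d i - eSq d ⟨0, hd⟩)) := by
  classical
  funext q
  simp only [Pi.add_apply, Finset.sum_apply, Pi.smul_apply, Pi.sub_apply, eSq, ePr, eLn,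
    Pi.single_apply, smul_eq_mul, mul_sub, mul_ite, mul_one, mul_zero]
  rcases q with k | q | k
  · simp only [reduceCtorEq, if_false, Finset.sum_const_zero, zero_add, add_zero,
      Sum.inl.injEq, Finset.sum_sub_distrib]
    have h1 : ∑ i, (if (Sum.inl k : QIdx d) = Sum.inl i then v (Sum.inl i) else 0)
        = v (Sum.inl k) := by simp
    have h2 : ∑ i : Fin d, (if (Sum.inl k : QIdx d) = Sum.inl (⟨0, hd⟩ : Fin d)
        then v (Sum.inl i) else 0) = 0 := by
      by_cases hk : k = (⟨0, hd⟩ : Fin d) <;> simp [hk, hv]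
    simp only [Sum.inl.injEq] at h1 h2
    rw [h1, h2]
    ring
  · simp
  · simp

lemma ker_le_V (hd : 0 < d) : LinearMap.ker (sumSq d) ≤ V d := by
  intro v hv
  simp only [LinearMap.mem_ker, sumSq, LinearMap.coe_mk, AddHom.coe_mk] at hv
  rw [repr_of_sum_eq_zero hd v hv]
  refine Submodule.add_mem _ (Submodule.add_mem _ ?_ ?_) ?_ <;>
    refine Submodule.sum_mem _ fun x _ => Submodule.smul_mem _ _ ?_
  · exact lin_mem x
  · exact pr_mem hd x
  · exact sq_mem hd x

noncomputable def xi0 (d : ℕ) (hd : 0 < d) : QIdx d → ℝ := phi (ptE d ⟨0, hd⟩)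

noncomputable def Hsp (d : ℕ) (hd : 0 < d) : AffineSubspace ℝ (QIdx d → ℝ) :=
  AffineSubspace.mk' (xi0 d hd) (LinearMap.ker (sumSq d))

lemma xi0_sum (hd : 0 < d) : ∑ i, (xi0 d hd) (Sum.inl i) = 1 := by
  have := sphere_E (d := d) ⟨0, hd⟩
  simpa [xi0, phi] using this

lemma H_coe (hd : 0 < d) :
    (Hsp d hd : Set (QIdx d → ℝ)) = {ξ : QIdx d → ℝ | ∑ i, ξ (Sum.inl i) = 1} := by
  ext ξ
  simp only [Hsp, SetLike.mem_coe, AffineSubspace.mem_mk', LinearMap.mem_ker,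
    vsub_eq_sub, Set.mem_setOf_eq]
  rw [show sumSq d (ξ - xi0 d hd) = (∑ i, ξ (Sum.inl i)) - 1 from by
    simp [sumSq, Finset.sum_sub_distrib, xi0_sum hd], sub_eq_zero]

lemma span_le (hd : 0 < d) :
    affineSpan ℝ (phi '' (Sd d : Set (Fin d → ℝ))) ≤ Hsp d hd := by
  rw [affineSpan_le]
  rintro ξ ⟨x, hx, rfl⟩
  rw [show (Hsp d hd : Set (QIdx d → ℝ)) = _ from H_coe hd]
  show ∑ i, phi x (Sum.inl i) = 1
  have hx' : x ∈ Sd d := hx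
  obtain ⟨a, _, rfl⟩ := Finset.mem_image.mp hx'
  exact sphere_Pt a

lemma span_eq (hd : 0 < d) :
    affineSpan ℝ (phi '' (Sd d : Set (Fin d → ℝ))) = Hsp d hd := by
  apply AffineSubspace.ext_of_direction_eq
  · apply le_antisymm
    · have := AffineSubspace.direction_le (span_le hd)
      simp only [Hsp, AffineSubspace.direction_mk'] at this ⊢
      exact this
    · rw [direction_affineSpan]
      simp only [Hsp, AffineSubspace.direction_mk']
      exact ker_le_V hd
  · exact ⟨xi0 d hd, mem_affineSpan ℝ (phi_Pt_mem (Sum.inl ⟨0, hd⟩)),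
      AffineSubspace.self_mem_mk' _ _⟩

lemma V_eq_ker (hd : 0 < d) : V d = LinearMap.ker (sumSq d) := by
  have := congrArg AffineSubspace.direction (span_eq hd)
  rw [direction_affineSpan] at this
  simp only [Hsp, AffineSubspace.direction_mk'] at this
  exact this

lemma sumSq_surj (hd : 0 < d) : Function.Surjective (sumSq d) := by
  intro r
  refine ⟨fun q => if q = Sum.inl ⟨0, hd⟩ then r else 0, ?_⟩
  simp [sumSq, Finset.sum_ite_eq']

lemma finrank_ker (hd : 0 < d) :
    Module.finrank ℝ (LinearMap.ker (sumSq d)) = Fintype.card (QIdx d) - 1 := by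
  have hrange : LinearMap.range (sumSq d) = ⊤ := LinearMap.range_eq_top.mpr (sumSq_surj hd)
  have hrn := LinearMap.finrank_range_add_finrank_ker (sumSq d)
  rw [hrange, finrank_top, Module.finrank_self, Module.finrank_fintype_fun_eq_card] at hrn
  have hn : 0 < Fintype.card (QIdx d) := Fintype.card_pos_iff.mpr ⟨Sum.inl ⟨0, hd⟩⟩
  omega

end SpherePts

/-- There exists a set `S` of `B = (d² + 3d)/2` points on the unit sphere
`S^{d-1}` such that `φ(S)` has affine span equal to the hyperplane
`{ξ : ξ₁ + ⋯ + ξ_d = 1}`; in particular `φ` is injective on `S` and `φ(S)` is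
affinely independent. -/
theorem exists_sphere_points_phi_spans (d : ℕ) (hd : 0 < d) :
    ∃ S : Finset (Fin d → ℝ),
      (∀ x ∈ S, ∑ i, x i ^ 2 = 1) ∧
      S.card = (d ^ 2 + 3 * d) / 2 ∧
      (affineSpan ℝ (phi '' (S : Set (Fin d → ℝ))) : Set (QIdx d → ℝ)) =
        {ξ : QIdx d → ℝ | ∑ i, ξ (Sum.inl i) = 1} ∧
      Set.InjOn phi (S : Set (Fin d → ℝ)) ∧
      AffineIndependent ℝ (fun y : phi '' (S : Set (Fin d → ℝ)) => (y : QIdx d → ℝ)) := by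
  classical
  open SpherePts in
  refine ⟨Sd d, ?_, ?_, ?_, ?_, ?_⟩
  · -- sphere condition
    intro x hx
    obtain ⟨a, _, rfl⟩ := Finset.mem_image.mp hx
    exact sphere_Pt a
  · -- cardinality
    rw [Sd, Finset.card_image_of_injective _ Pt_inj, Finset.card_univ, card_QIdx]
  · -- span equality
    rw [span_eq hd, H_coe hd]
  · -- injectivity
    intro x _ y _ h
    funext i
    exact congrFun h (Sum.inr (Sum.inr i))
  · -- affine independence
    haveI : Fintype ↥(phi '' ((Sd d : Finset (Fin d → ℝ)) : Set (Fin d → ℝ))) :=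
      Set.Finite.fintype (((Sd d).finite_toSet).image phi)
    have hphi_inj : Function.Injective (phi (d := d)) := fun x y h =>
      funext fun i => congrFun h (Sum.inr (Sum.inr i))
    have hT : (phi '' ((Sd d : Finset (Fin d → ℝ)) : Set (Fin d → ℝ)))
        = Set.range (phi ∘ Pt d) := by
      rw [Sd, Finset.coe_image, Finset.coe_univ, Set.image_univ, ← Set.range_comp]
    have hinj : Function.Injective (phi ∘ Pt d) := hphi_inj.comp Pt_inj
    have hcard : Fintype.card ↥(phi '' ((Sd d : Finset (Fin d → ℝ)) : Set (Fin d → ℝ)))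
        = Fintype.card (QIdx d) := by
      rw [Fintype.card_congr (Equiv.setCongr hT)]
      exact Set.card_range_of_injective hinj
    have hn : 0 < Fintype.card (QIdx d) := Fintype.card_pos_iff.mpr ⟨Sum.inl ⟨0, hd⟩⟩
    rw [affineIndependent_iff_finrank_vectorSpan_eq ℝ _
      (show Fintype.card _ = (Fintype.card (QIdx d) - 1) + 1 by rw [hcard]; omega)]
    rw [Subtype.range_coe]
    have hV : vectorSpan ℝ (phi '' ((Sd d : Finset (Fin d → ℝ)) : Set (Fin d → ℝ)))
        = LinearMap.ker (sumSq d) := V_eq_ker hd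
    rw [hV]
    exact finrank_ker hd
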